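/- Lemma 6.5: Let w₁, w₂ : Λ → ℝ be upper semicontinuous (with respect to d_∞) functions bounded from above with limsup_{t+|x|_C→∞} w₁(t,x)/(t+|x|_C) < 0 and limsup_{t+|x|_C→∞} w₂(t,x)/(t+|x|_C) < 0, and suppose there is a local modulus of continuity ρ₁ with w₁(t,x) - w₁(s,x_{s-t}) ≤ ρ₁(|s-t|,|x|_C) and w₂(t,x) - w₂(s,x_{s-t}) ≤ ρ₁(|s-t|,|x|_C) for all t̂ ≤ t ≤ s < ∞ and x ∈ 𝒞₀. Let φ ∈ C²(ℝ^d×ℝ^d) be such that w₁(t,x) + w₂(t,y) - φ(x(0),y(0)) has a maximum over [t̂,∞)×𝒞₀×𝒞₀ at a point (t̂,x̂,ŷ). Then the function (t,x₀,y₀) ↦ w̃₁^{t̂,*}(t,x₀) + w̃₂^{t̂,*}(t,y₀) - φ(x₀,y₀) has a maximum over [0,∞)×ℝ^d×ℝ^d at (t̂, x̂(0), ŷ(0)), and moreover w̃₁^{t̂,*}(t̂,x̂(0)) = w₁(t̂,x̂) and w̃₂^{t̂,*}(t̂,ŷ(0)) = w₂(t̂,ŷ). -/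

import Mathlib

open Filter Topology MeasureTheory Matrix
open scoped RealInnerProductSpace

noncomputable section

namespace PathHJB

/-- The domain `(-∞,0]` of the paths. -/
abbrev PathDom : Type := Set.Iic (0 : ℝ)

abbrev Eucl (d : ℕ) := EuclideanSpace ℝ (Fin d)

/-- Paths on `(-∞,0]` with values in `ℝ^d`. -/
abbrev Pth (d : ℕ) := PathDom → Eucl d

def zeroPt : PathDom := ⟨0, Set.mem_Iic.mpr le_rfl⟩

/-- The sup norm `|x|_C`. -/
def normC {d : ℕ} (x : Pth d) : ℝ := ⨆ θ : PathDom, ‖x θ‖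

/-- The shifted path `x_h`. -/
def shift {d : ℕ} (x : Pth d) (h : ℝ) : Pth d := fun θ =>
  if hθ : -h ≤ θ.1 then x zeroPt
  else x ⟨θ.1 + h, Set.mem_Iic.mpr (by push_neg at hθ; linarith)⟩

/-- The vertical perturbation `x + v · 1_{{0}}`. -/
def vpert {d : ℕ} (x : Pth d) (v : Eucl d) : Pth d := fun θ =>
  if θ.1 = 0 then x θ + v else x θ

/-- Càdlàg: right-continuous with left limits. -/
def IsCadlag {d : ℕ} (x : Pth d) : Prop :=
  (∀ θ : PathDom, ContinuousWithinAt x {η : PathDom | θ.1 ≤ η.1} θ) ∧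
  (∀ θ : PathDom, ∃ L : Eucl d, Tendsto x (nhdsWithin θ {η : PathDom | η.1 < θ.1}) (nhds L))

/-- `𝒟₀`: càdlàg paths vanishing at `-∞`. -/
def D0 (d : ℕ) : Set (Pth d) := {x | IsCadlag x ∧ Tendsto x atBot (nhds 0)}

/-- `𝒞₀`: continuous paths vanishing at `-∞`. -/
def C0 (d : ℕ) : Set (Pth d) := {x | Continuous x ∧ Tendsto x atBot (nhds 0)}

/-- The metric `d_∞`. -/
def dInfty {d : ℕ} (p q : ℝ × Pth d) : ℝ :=
  if p.1 ≤ q.1 then |q.1 - p.1| + normC (shift p.2 (q.1 - p.1) - q.2)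
  else |p.1 - q.1| + normC (shift q.2 (p.1 - q.1) - p.2)

/-- `Λ̂^t = [t,∞) × 𝒟₀`. -/
def LamHat (d : ℕ) (t : ℝ) : Set (ℝ × Pth d) := {p | t ≤ p.1 ∧ p.2 ∈ D0 d}

/-- `Λ^t = [t,∞) × 𝒞₀`. -/
def Lam (d : ℕ) (t : ℝ) : Set (ℝ × Pth d) := {p | t ≤ p.1 ∧ p.2 ∈ C0 d}

def stdBasis (d : ℕ) (i : Fin d) : Eucl d := EuclideanSpace.single i 1

/-- Horizontal (Dupire) derivative. -/
def HasHorizDerivAt {d : ℕ} (f : ℝ × Pth d → ℝ) (p : ℝ × Pth d) (v : ℝ) : Prop :=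
  Tendsto (fun h : ℝ => (f (p.1 + h, shift p.2 h) - f p) / h) (𝓝[>] (0:ℝ)) (𝓝 v)

/-- Vertical (Dupire) derivative in direction `e_i`. -/
def HasVertDerivAt {d : ℕ} (f : ℝ × Pth d → ℝ) (p : ℝ × Pth d) (i : Fin d) (v : ℝ) : Prop :=
  Tendsto (fun h : ℝ => (f (p.1, vpert p.2 (h • stdBasis d i)) - f p) / h) (𝓝[≠] (0:ℝ)) (𝓝 v)

/-- Continuity on a set w.r.t. `d_∞`. -/
def DContinuousOn {d : ℕ} {E : Type*} [NormedAddCommGroup E]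
    (f : ℝ × Pth d → E) (S : Set (ℝ × Pth d)) : Prop :=
  ∀ p ∈ S, ∀ ε > (0:ℝ), ∃ δ > (0:ℝ), ∀ q ∈ S, dInfty p q < δ → ‖f q - f p‖ < ε

/-- Uniform continuity on a set w.r.t. `d_∞`. -/
def DUnifContOn {d : ℕ} {E : Type*} [NormedAddCommGroup E]
    (f : ℝ × Pth d → E) (S : Set (ℝ × Pth d)) : Prop :=
  ∀ ε > (0:ℝ), ∃ δ > (0:ℝ), ∀ p ∈ S, ∀ q ∈ S, dInfty p q < δ → ‖f q - f p‖ < ε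

def BoundedOn {d : ℕ} {E : Type*} [NormedAddCommGroup E]
    (f : ℝ × Pth d → E) (S : Set (ℝ × Pth d)) : Prop :=
  ∃ M : ℝ, ∀ p ∈ S, ‖f p‖ ≤ M

def PolyGrowthOn {d : ℕ} {E : Type*} [NormedAddCommGroup E]
    (f : ℝ × Pth d → E) (S : Set (ℝ × Pth d)) : Prop :=
  ∃ C : ℝ, ∃ k : ℕ, ∀ p ∈ S, ‖f p‖ ≤ C * (1 + |p.1| + normC p.2) ^ k

/-- `f ∈ C_p^{1,2}(Λ̂^t)`, with prescribed pathwise derivatives. -/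
structure IsCp12Hat (d : ℕ) (t : ℝ) (f : ℝ × Pth d → ℝ) (ft : ℝ × Pth d → ℝ)
    (fx : ℝ × Pth d → Eucl d) (fxx : ℝ × Pth d → Matrix (Fin d) (Fin d) ℝ) : Prop where
  horiz : ∀ p ∈ LamHat d t, HasHorizDerivAt f p (ft p)
  vert : ∀ p ∈ LamHat d t, ∀ i, HasVertDerivAt f p i (fx p i)
  vert2 : ∀ p ∈ LamHat d t, ∀ i j, HasVertDerivAt (fun q => fx q j) p i (fxx p i j)
  cont : DContinuousOn f (LamHat d t)
  cont_t : DContinuousOn ft (LamHat d t)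
  cont_x : DContinuousOn fx (LamHat d t)
  cont_xx : ∀ i j, DContinuousOn (fun p => fxx p i j) (LamHat d t)
  growth : PolyGrowthOn f (LamHat d t)
  growth_t : PolyGrowthOn ft (LamHat d t)
  growth_x : PolyGrowthOn fx (LamHat d t)
  growth_xx : ∀ i j, PolyGrowthOn (fun p => fxx p i j) (LamHat d t)

/-- Hilbert–Schmidt norm of a matrix. -/
def hsNorm {m n : ℕ} (A : Matrix (Fin m) (Fin n) ℝ) : ℝ :=
  Real.sqrt (∑ i, ∑ j, (A i j) ^ 2)

/-- The Hamiltonian `H`. -/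
def Ham {d n : ℕ} {U : Type*} (b : Pth d → U → Eucl d)
    (σ' : Pth d → U → Matrix (Fin d) (Fin n) ℝ) (q : Pth d → U → ℝ)
    (x : Pth d) (p : Eucl d) (l : Matrix (Fin d) (Fin d) ℝ) : ℝ :=
  ⨅ u : U, ((inner ℝ p (b x u) : ℝ) + (1/2) * (l * (σ' x u * (σ' x u)ᵀ)).trace + q x u)

/-- Hypothesis 4.2. -/
structure Hyp42 {d n : ℕ} {U : Type*} [PseudoMetricSpace U] (L : ℝ)
    (b : Pth d → U → Eucl d) (σ' : Pth d → U → Matrix (Fin d) (Fin n) ℝ)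
    (q : Pth d → U → ℝ) : Prop where
  pos : 0 < L
  continuous : ∀ x ∈ C0 d, ∀ u : U, ∀ ε > (0:ℝ), ∃ δ > (0:ℝ), ∀ y ∈ C0 d, ∀ u' : U,
    normC (x - y) < δ → dist u u' < δ →
    ‖b x u - b y u'‖ < ε ∧ hsNorm (σ' x u - σ' y u') < ε ∧ |q x u - q y u'| < ε
  bound_b : ∀ x ∈ C0 d, ∀ u : U, ‖b x u‖ ^ 2 ≤ L ^ 2 * (1 + normC x ^ 2)
  bound_σ : ∀ x ∈ C0 d, ∀ u : U, hsNorm (σ' x u) ^ 2 ≤ L ^ 2 * (1 + normC x ^ 2)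
  bound_q : ∀ x ∈ C0 d, ∀ u : U, (q x u) ^ 2 ≤ L ^ 2 * (1 + normC x ^ 2)
  lip_b : ∀ x ∈ C0 d, ∀ y ∈ C0 d, ∀ u : U, ‖b x u - b y u‖ ≤ L * normC (x - y)
  lip_σ : ∀ x ∈ C0 d, ∀ y ∈ C0 d, ∀ u : U, hsNorm (σ' x u - σ' y u) ≤ L * normC (x - y)
  lip_q : ∀ x ∈ C0 d, ∀ y ∈ C0 d, ∀ u : U, |q x u - q y u| ≤ L * normC (x - y)

/-- Viscosity subsolution of `-λ w + ∂_t w + H(x, ∂_x w, ∂_{xx} w) = 0`. -/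
def IsViscSubsol {d n : ℕ} {U : Type*} (lam : ℝ) (b : Pth d → U → Eucl d)
    (σ' : Pth d → U → Matrix (Fin d) (Fin n) ℝ) (q : Pth d → U → ℝ)
    (w : Pth d → ℝ) : Prop :=
  ∀ s : ℝ, 0 ≤ s → ∀ x ∈ C0 d,
    ∀ (φ φt : ℝ × Pth d → ℝ) (φx : ℝ × Pth d → Eucl d)
      (φxx : ℝ × Pth d → Matrix (Fin d) (Fin d) ℝ),
      IsCp12Hat d s φ φt φx φxx →
      w x - φ (s, x) = 0 →
      (∀ p ∈ Lam d s, w p.2 - φ p ≤ 0) →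
      0 ≤ -lam * w x + φt (s, x) + Ham b σ' q x (φx (s, x)) (φxx (s, x))

/-- Viscosity supersolution. -/
def IsViscSupersol {d n : ℕ} {U : Type*} (lam : ℝ) (b : Pth d → U → Eucl d)
    (σ' : Pth d → U → Matrix (Fin d) (Fin n) ℝ) (q : Pth d → U → ℝ)
    (w : Pth d → ℝ) : Prop :=
  ∀ s : ℝ, 0 ≤ s → ∀ x ∈ C0 d,
    ∀ (φ φt : ℝ × Pth d → ℝ) (φx : ℝ × Pth d → Eucl d)
      (φxx : ℝ × Pth d → Matrix (Fin d) (Fin d) ℝ),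
      IsCp12Hat d s φ φt φx φxx →
      w x + φ (s, x) = 0 →
      (∀ p ∈ Lam d s, 0 ≤ w p.2 + φ p) →
      -lam * w x - φt (s, x) + Ham b σ' q x (-φx (s, x)) (-φxx (s, x)) ≤ 0


/-- The two-argument functional `S_m(t,x,s,y)`. -/
def SmP {d : ℕ} (m : ℕ) (p q : ℝ × Pth d) : ℝ :=
  if normC (shift p.2 (max (q.1 - p.1) 0) - shift q.2 (max (p.1 - q.1) 0)) = 0 then 0
  else (normC (shift p.2 (max (q.1 - p.1) 0) - shift q.2 (max (p.1 - q.1) 0)) ^ (2*m)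
        - ‖p.2 zeroPt - q.2 zeroPt‖ ^ (2*m)) ^ 3
       / normC (shift p.2 (max (q.1 - p.1) 0) - shift q.2 (max (p.1 - q.1) 0)) ^ (4*m)

/-- `Υ^{m,M}(t,x,s,y)`. -/
def UpsP {d : ℕ} (m : ℕ) (M : ℝ) (p q : ℝ × Pth d) : ℝ :=
  SmP m p q + M * ‖p.2 zeroPt - q.2 zeroPt‖ ^ (2*m)

/-- `Ῡ^{m,M}(t,x,s,y) = Υ^{m,M}(t,x,s,y) + |s-t|²`. -/
def UpsBarP {d : ℕ} (m : ℕ) (M : ℝ) (p q : ℝ × Pth d) : ℝ :=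
  UpsP m M p q + (q.1 - p.1) ^ 2

/-- The single-path functional `Υ^{m,M}(x)`. -/
def Ups0 {d : ℕ} (m : ℕ) (M : ℝ) (x : Pth d) : ℝ :=
  (if normC x = 0 then 0
   else (normC x ^ (2*m) - ‖x zeroPt‖ ^ (2*m)) ^ 3 / normC x ^ (4*m))
  + M * ‖x zeroPt‖ ^ (2*m)

/-- `w̃^{t̂}` before taking the upper semicontinuous envelope:
the sup of `w(t,ξ)` over `ξ ∈ 𝒞₀` with `ξ(0) = x₀`. -/
def sliceSup {d : ℕ} (w : ℝ × Pth d → ℝ) (t : ℝ) (x0 : Eucl d) : ℝ :=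
  sSup {r : ℝ | ∃ ξ ∈ C0 d, ξ zeroPt = x0 ∧ r = w (t, ξ)}

def tildeW {d : ℕ} (w : ℝ × Pth d → ℝ) (tHat : ℝ) : ℝ × Eucl d → ℝ := fun p =>
  if tHat ≤ p.1 then sliceSup w p.1 p.2
  else sliceSup w tHat p.2 - Real.sqrt (tHat - p.1)

/-- Upper semicontinuous envelope. -/
def uscEnv {d : ℕ} (g : ℝ × Eucl d → ℝ) : ℝ × Eucl d → ℝ := fun p =>
  Filter.limsup g (nhds p)

/-- A local modulus of continuity. -/
structure LocalModulus (ρ : ℝ → ℝ → ℝ) : Prop where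
  cont : Continuous fun p : ℝ × ℝ => ρ p.1 p.2
  nonneg : ∀ t r, 0 ≤ t → 0 ≤ r → 0 ≤ ρ t r
  zero : ∀ r, 0 ≤ r → ρ 0 r = 0
  subadd : ∀ t s r, 0 ≤ t → 0 ≤ s → 0 ≤ r → ρ (t + s) r ≤ ρ t r + ρ s r
  mono : ∀ t r r', 0 ≤ t → 0 ≤ r → r ≤ r' → ρ t r ≤ ρ t r'

/-- Upper semicontinuity on a set w.r.t. `d_∞`. -/
def DUSCOn {d : ℕ} (w : ℝ × Pth d → ℝ) (S : Set (ℝ × Pth d)) : Prop :=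
  ∀ p ∈ S, ∀ ε > (0:ℝ), ∃ δ > (0:ℝ), ∀ q ∈ S, dInfty p q < δ → w q < w p + ε

def BddAboveOn {d : ℕ} (w : ℝ × Pth d → ℝ) (S : Set (ℝ × Pth d)) : Prop :=
  ∃ M : ℝ, ∀ p ∈ S, w p ≤ M

/-- `limsup_{t+|x|_C → ∞} w(t,x)/(t+|x|_C) < 0` on `Λ`. -/
def NegLimsupAtInfty {d : ℕ} (w : ℝ × Pth d → ℝ) : Prop :=
  ∃ c < (0:ℝ), ∃ R : ℝ, ∀ p ∈ Lam d 0, R ≤ p.1 + normC p.2 →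
    w p ≤ c * (p.1 + normC p.2)

/-- `φ ∈ C^{1,2}([0,∞) × ℝ^d)` with prescribed derivatives. -/
structure IsC12Fin (d : ℕ) (φ φt : ℝ × Eucl d → ℝ) (φx : ℝ × Eucl d → Eucl d)
    (φxx : ℝ × Eucl d → Matrix (Fin d) (Fin d) ℝ) : Prop where
  ht : ∀ p : ℝ × Eucl d, HasDerivAt (fun s => φ (s, p.2)) (φt p) p.1
  hx : ∀ p : ℝ × Eucl d, HasGradientAt (fun y => φ (p.1, y)) (φx p) p.2
  hxx : ∀ p : ℝ × Eucl d, ∀ i j,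
    HasDerivAt (fun h : ℝ => φx (p.1, p.2 + h • stdBasis d j) i) (φxx p i j) 0
  cont : Continuous φ
  cont_t : Continuous φt
  cont_x : Continuous φx
  cont_xx : ∀ i j, Continuous fun p => φxx p i j

/-- The class `Φ(t̂, x̂₀, T)` of Definition 6.1. -/
def PhiClass (d : ℕ) (tHat : ℝ) (xHat0 : Eucl d) (T : ℝ) (f : ℝ × Eucl d → ℝ) : Prop :=
  ∃ r > (0:ℝ), ∀ L > (0:ℝ),
    ∀ (φ φt : ℝ × Eucl d → ℝ) (φx : ℝ × Eucl d → Eucl d)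
      (φxx : ℝ × Eucl d → Matrix (Fin d) (Fin d) ℝ),
      IsC12Fin d φ φt φx φxx →
      ∀ t : ℝ, ∀ x0 : Eucl d, 0 < t → t < T →
        (∀ s : ℝ, ∀ y : Eucl d, 0 ≤ s → s ≤ T → f (s, y) - φ (s, y) ≤ f (t, x0) - φ (t, x0)) →
        ∃ C > (0:ℝ),
          (|t - tHat| + ‖x0 - xHat0‖ < r →
           |f (t, x0)| + ‖φx (t, x0)‖ + hsNorm (φxx (t, x0)) ≤ L →
           C ≤ φt (t, x0))

/-- Operator norm of a square matrix, via the associated Euclidean linear map. -/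
def matOpNorm {ι : Type*} [Fintype ι] [DecidableEq ι] (A : Matrix ι ι ℝ) : ℝ :=
  ‖LinearMap.toContinuousLinearMap (Matrix.toEuclideanLin A)‖

/-- The second-derivative matrix of `φ : ℝ^d × ℝ^d → ℝ` at a point, as a
`(2d) × (2d)` matrix indexed by `Fin d ⊕ Fin d`. -/
def hess2 {d : ℕ} (φ : Eucl d × Eucl d → ℝ) (z : Eucl d × Eucl d) :
    Matrix (Fin d ⊕ Fin d) (Fin d ⊕ Fin d) ℝ := fun k l =>
  iteratedFDeriv ℝ 2 φ z
    ![Sum.elim (fun i => ((stdBasis d i, 0) : Eucl d × Eucl d))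
        (fun j => ((0, stdBasis d j) : Eucl d × Eucl d)) k,
      Sum.elim (fun i => ((stdBasis d i, 0) : Eucl d × Eucl d))
        (fun j => ((0, stdBasis d j) : Eucl d × Eucl d)) l]

/-- Hessian matrix of `φ : ℝ^d → ℝ`. -/
def hess1 {d : ℕ} (φ : Eucl d → ℝ) (z : Eucl d) : Matrix (Fin d) (Fin d) ℝ := fun i j =>
  iteratedFDeriv ℝ 2 φ z ![stdBasis d i, stdBasis d j]


/-- The path `x - a_{t-t̂}` appearing in `S_m(t,x,t̂,a)` (for `t ≥ t̂`). -/
def zRel {d : ℕ} (tHat : ℝ) (a : Pth d) (p : ℝ × Pth d) : Pth d :=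
  shift p.2 (max (tHat - p.1) 0) - shift a (max (p.1 - tHat) 0)

/-!
Competitors for `w̃₁^{t̂}(τ, x₀)` are paths `ξ` at times `τ ≥ t̂`. Freezing `ŷ` on `[t̂, τ]` and
using the joint maximum gives
`w₁(τ, ξ) ≤ w₁(t̂, x̂) + ρ₁(τ - t̂, |ŷ|_C) + φ(ξ(0), ŷ(0)) - φ(x̂(0), ŷ(0))`,
a bound continuous in `(τ, ξ(0))` and equal to `w₁(t̂, x̂)` at `(t̂, x̂(0))`; this pins down the
envelope there. For the maximum, near-maximisers `ξ` and `η` of the two envelopes at nearby times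
are both frozen up to the later time, where the joint maximum applies; the cost of freezing is
uniformly small because the negative growth at infinity bounds `|ξ|_C` and `|η|_C`.
-/

section Paths

variable {d : ℕ}

lemma normC_nonneg (x : Pth d) : 0 ≤ normC x :=
  Real.iSup_nonneg fun _ => norm_nonneg _

lemma shift_eq_comp (x : Pth d) (h : ℝ) :
    shift x h = fun θ => x ⟨min (θ.1 + h) 0, Set.mem_Iic.mpr (min_le_right _ _)⟩ := by
  funext θ
  unfold shift
  split_ifs with hθ
  · congr 1; ext; simp [zeroPt, min_eq_right (by linarith : (0:ℝ) ≤ θ.1 + h)]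
  · congr 1; ext; simp [min_eq_left (by linarith : θ.1 + h ≤ 0)]

lemma shift_apply_zeroPt (x : Pth d) {h : ℝ} (hh : 0 ≤ h) : shift x h zeroPt = x zeroPt := by
  simp [shift, zeroPt, hh]

lemma shift_mem_C0 {x : Pth d} (hx : x ∈ C0 d) (h : ℝ) : shift x h ∈ C0 d := by
  rw [shift_eq_comp x h]
  refine ⟨hx.1.comp (by fun_prop), hx.2.comp (tendsto_Iic_atBot.mpr ?_)⟩
  refine tendsto_atBot_mono (fun θ => min_le_left _ _) (tendsto_atBot_add_const_right _ h ?_)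
  exact (map_val_Iic_atBot (0:ℝ)).le

def expPath (x₀ : Eucl d) : Pth d := fun θ => Real.exp θ.1 • x₀

lemma expPath_mem_C0 (x₀ : Eucl d) : expPath x₀ ∈ C0 d := by
  refine ⟨by unfold expPath; fun_prop, ?_⟩
  unfold expPath
  simpa using (Real.tendsto_exp_atBot.comp (map_val_Iic_atBot (0:ℝ)).le).smul_const x₀

lemma expPath_zeroPt (x₀ : Eucl d) : expPath x₀ zeroPt = x₀ := by
  simp [expPath, zeroPt]

end Paths

section Envelope

variable {d : ℕ}

lemma le_uscEnv {g : ℝ × Eucl d → ℝ} (hg : BddAbove (Set.range g)) (p : ℝ × Eucl d) :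
    g p ≤ uscEnv g p :=
  le_limsup_of_frequently_le (fun h => h.self_of_nhds le_rfl) hg.isBoundedUnder_of_range

lemma isCoboundedUnder_le_nhds (g : ℝ × Eucl d → ℝ) (p : ℝ × Eucl d) :
    IsCoboundedUnder (· ≤ ·) (𝓝 p) g :=
  ⟨g p, fun _ ha => (eventually_map.mp ha).self_of_nhds⟩

lemma uscEnv_le {g B : ℝ × Eucl d → ℝ} (hle : g ≤ B) {p : ℝ × Eucl d}
    (hB : ContinuousAt B p) : uscEnv g p ≤ B p :=
  hB.limsup_eq ▸ limsup_le_limsup (.of_forall hle) (isCoboundedUnder_le_nhds g p)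
    hB.isBoundedUnder_le

lemma exists_dist_lt_of_lt_uscEnv {g : ℝ × Eucl d → ℝ} {p : ℝ × Eucl d} {a : ℝ}
    (ha : a < uscEnv g p) {δ : ℝ} (hδ : 0 < δ) : ∃ q, dist q p < δ ∧ a < g q :=
  ((frequently_lt_of_lt_limsup (isCoboundedUnder_le_nhds g p) ha).and_eventually
    (Metric.ball_mem_nhds p hδ)).exists.imp fun _ hq => ⟨hq.2, hq.1⟩

lemma nonempty_sliceSet (w : ℝ × Pth d → ℝ) (t : ℝ) (x₀ : Eucl d) :
    {r : ℝ | ∃ ξ ∈ C0 d, ξ zeroPt = x₀ ∧ r = w (t, ξ)}.Nonempty :=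
  ⟨_, expPath x₀, expPath_mem_C0 x₀, expPath_zeroPt x₀, rfl⟩

lemma sliceSup_le {w : ℝ × Pth d → ℝ} {t : ℝ} {x₀ : Eucl d} {B : ℝ}
    (hB : ∀ ξ ∈ C0 d, ξ zeroPt = x₀ → w (t, ξ) ≤ B) : sliceSup w t x₀ ≤ B :=
  csSup_le (nonempty_sliceSet w t x₀) <| by
    rintro _ ⟨ξ, hξ, hξ₀, rfl⟩
    exact hB ξ hξ hξ₀

lemma le_sliceSup {w : ℝ × Pth d → ℝ} (hbdd : BddAboveOn w (Lam d 0)) {t : ℝ} (ht : 0 ≤ t)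
    {ξ : Pth d} (hξ : ξ ∈ C0 d) : w (t, ξ) ≤ sliceSup w t (ξ zeroPt) := by
  obtain ⟨M, hM⟩ := hbdd
  refine le_csSup ⟨M, ?_⟩ ⟨ξ, hξ, rfl, rfl⟩
  rintro _ ⟨η, hη, -, rfl⟩
  exact hM _ ⟨ht, hη⟩

lemma exists_lt_of_lt_sliceSup {w : ℝ × Pth d → ℝ} {t a : ℝ} {x₀ : Eucl d}
    (ha : a < sliceSup w t x₀) : ∃ ξ ∈ C0 d, ξ zeroPt = x₀ ∧ a < w (t, ξ) := by
  obtain ⟨_, ⟨ξ, hξ, hξ₀, rfl⟩, hlt⟩ :=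
    exists_lt_of_lt_csSup (nonempty_sliceSet w t x₀) ha
  exact ⟨ξ, hξ, hξ₀, hlt⟩

lemma tildeW_le_sliceSup (w : ℝ × Pth d → ℝ) (tHat : ℝ) (p : ℝ × Eucl d) :
    tildeW w tHat p ≤ sliceSup w (max p.1 tHat) p.2 := by
  unfold tildeW
  split_ifs with h
  · rw [max_eq_left h]
  · rw [max_eq_right (not_le.mp h).le]
    linarith [Real.sqrt_nonneg (tHat - p.1)]

lemma bddAbove_range_tildeW {w : ℝ × Pth d → ℝ} (hbdd : BddAboveOn w (Lam d 0)) {tHat : ℝ}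
    (htHat : 0 ≤ tHat) : BddAbove (Set.range (tildeW w tHat)) := by
  obtain ⟨M, hM⟩ := hbdd
  refine ⟨M, ?_⟩
  rintro _ ⟨p, rfl⟩
  exact (tildeW_le_sliceSup w tHat p).trans
    (sliceSup_le fun ξ hξ _ => hM _ ⟨htHat.trans (le_max_right _ _), hξ⟩)

lemma exists_lt_of_lt_uscEnv_tildeW {w : ℝ × Pth d → ℝ} {tHat t a δ : ℝ} {x₀ : Eucl d}
    (ha : a < uscEnv (tildeW w tHat) (t, x₀)) (hδ : 0 < δ) :
    ∃ s, |s - t| < δ ∧ ∃ ξ ∈ C0 d, dist (ξ zeroPt) x₀ < δ ∧ a < w (max s tHat, ξ) := by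
  obtain ⟨⟨s, u⟩, hq, hlt⟩ := exists_dist_lt_of_lt_uscEnv ha hδ
  obtain ⟨ξ, hξ, rfl, hξlt⟩ :=
    exists_lt_of_lt_sliceSup (hlt.trans_le (tildeW_le_sliceSup w tHat _))
  rw [Prod.dist_eq, max_lt_iff, Real.dist_eq] at hq
  exact ⟨s, hq.1, ξ, hξ, hq.2, hξlt⟩

end Envelope

lemma max_max_lt_max_add {s₁ s₂ t c δ : ℝ} (h₁ : |s₁ - t| < δ) (h₂ : |s₂ - t| < δ) :
    max (max s₁ c) (max s₂ c) < max s₁ c + 2 * δ := by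
  rw [abs_lt] at h₁ h₂
  have hc := le_max_right s₁ c
  exact max_lt (by linarith) (max_lt (by linarith [le_max_left s₁ c]) (by linarith))

section Maximum

variable {d : ℕ}

def HasShiftModulus (w : ℝ × Pth d → ℝ) (tHat : ℝ) (ρ : ℝ → ℝ → ℝ) : Prop :=
  ∀ t s : ℝ, tHat ≤ t → t ≤ s → ∀ x ∈ C0 d,
    w (t, x) - w (s, shift x (s - t)) ≤ ρ (s - t) (normC x)

def IsPairMaxAt (w v : ℝ × Pth d → ℝ) (ψ : Eucl d × Eucl d → ℝ) (tHat : ℝ) (xHat yHat : Pth d) :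
    Prop :=
  ∀ t, tHat ≤ t → ∀ x ∈ C0 d, ∀ y ∈ C0 d,
    w (t, x) + v (t, y) - ψ (x zeroPt, y zeroPt)
      ≤ w (tHat, xHat) + v (tHat, yHat) - ψ (xHat zeroPt, yHat zeroPt)

lemma IsPairMaxAt.swap {w v : ℝ × Pth d → ℝ} {ψ : Eucl d × Eucl d → ℝ} {tHat : ℝ}
    {xHat yHat : Pth d} (h : IsPairMaxAt w v ψ tHat xHat yHat) :
    IsPairMaxAt v w (ψ ∘ Prod.swap) tHat yHat xHat := fun t ht y hy x hx => by
  simpa only [Function.comp_apply, Prod.swap_prod_mk, add_comm] using h t ht x hx y hy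

lemma LocalModulus.exists_lt {ρ : ℝ → ℝ → ℝ} (hρ : LocalModulus ρ) (N : ℝ) {ε : ℝ}
    (hε : 0 < ε) : ∃ δ > 0, ∀ h r, 0 ≤ h → h < δ → 0 ≤ r → r ≤ N → ρ h r < ε := by
  have hcont : ContinuousAt (fun h => ρ h (max N 0)) 0 :=
    (hρ.cont.comp (continuous_id.prodMk continuous_const)).continuousAt
  have hsmall : ∀ᶠ h in 𝓝 0, ρ h (max N 0) < ε :=
    hcont.eventually_lt continuousAt_const (by simpa [hρ.zero _ (le_max_right N 0)] using hε)
  obtain ⟨δ, hδ, hδsmall⟩ := Metric.eventually_nhds_iff.mp hsmall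
  refine ⟨δ, hδ, fun h r hh hhδ hr hrN => ?_⟩
  have hρh : ρ h (max N 0) < ε := hδsmall (by rwa [Real.dist_0_eq_abs, abs_of_nonneg hh])
  exact (hρ.mono h r _ hh hr (hrN.trans (le_max_left N 0))).trans_lt hρh

lemma NegLimsupAtInfty.exists_normC_le {w : ℝ × Pth d → ℝ} (hw : NegLimsupAtInfty w) (a : ℝ) :
    ∃ N, ∀ τ, 0 ≤ τ → ∀ ξ ∈ C0 d, a < w (τ, ξ) → normC ξ ≤ N := by
  obtain ⟨c, hc, R, hR⟩ := hw
  refine ⟨max R (a / c), fun τ hτ ξ hξ ha => ?_⟩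
  by_contra! hN
  have hwξ := hR (τ, ξ) ⟨hτ, hξ⟩ (by linarith [le_max_left R (a / c)])
  have : normC ξ * c < a := (div_lt_iff_of_neg hc).mp ((le_max_right R _).trans_lt hN)
  nlinarith

section OneSided

variable {w v : ℝ × Pth d → ℝ} {ψ : Eucl d × Eucl d → ℝ} {tHat : ℝ} {xHat yHat : Pth d}
  {ρ : ℝ → ℝ → ℝ}

lemma tildeW_le_of_isPairMaxAt (hmax : IsPairMaxAt w v ψ tHat xHat yHat)
    (hv : HasShiftModulus v tHat ρ) (hyHat : yHat ∈ C0 d) (p : ℝ × Eucl d) :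
    tildeW w tHat p ≤ w (tHat, xHat) + ρ (max p.1 tHat - tHat) (normC yHat)
      + (ψ (p.2, yHat zeroPt) - ψ (xHat zeroPt, yHat zeroPt)) := by
  refine (tildeW_le_sliceSup w tHat p).trans (sliceSup_le fun ξ hξ hξ₀ => ?_)
  have hτ : tHat ≤ max p.1 tHat := le_max_right _ _
  have hjoint := hmax _ hτ ξ hξ _ (shift_mem_C0 hyHat (max p.1 tHat - tHat))
  rw [hξ₀, shift_apply_zeroPt _ (sub_nonneg.mpr hτ)] at hjoint
  linarith [hv tHat _ le_rfl hτ yHat hyHat]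

lemma uscEnv_tildeW_eq_of_isPairMaxAt (hmax : IsPairMaxAt w v ψ tHat xHat yHat)
    (hv : HasShiftModulus v tHat ρ) (hρ : LocalModulus ρ) (hψ : Continuous ψ)
    (hbdd : BddAboveOn w (Lam d 0)) (htHat : 0 ≤ tHat) (hxHat : xHat ∈ C0 d)
    (hyHat : yHat ∈ C0 d) :
    uscEnv (tildeW w tHat) (tHat, xHat zeroPt) = w (tHat, xHat) := by
  refine le_antisymm ?_ ?_
  · have hcont : Continuous fun p : ℝ × Eucl d => w (tHat, xHat)
        + ρ (max p.1 tHat - tHat) (normC yHat)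
        + (ψ (p.2, yHat zeroPt) - ψ (xHat zeroPt, yHat zeroPt)) :=
      (continuous_const.add (hρ.cont.comp
        (f := fun p : ℝ × Eucl d => (max p.1 tHat - tHat, normC yHat)) (by fun_prop))).add
        ((hψ.comp (f := fun p : ℝ × Eucl d => (p.2, yHat zeroPt)) (by fun_prop)).sub
          continuous_const)
    simpa [hρ.zero _ (normC_nonneg yHat)] using
      uscEnv_le (p := (tHat, xHat zeroPt)) (tildeW_le_of_isPairMaxAt hmax hv hyHat)
        hcont.continuousAt
  · calc w (tHat, xHat) ≤ sliceSup w tHat (xHat zeroPt) := le_sliceSup hbdd htHat hxHat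
      _ = tildeW w tHat (tHat, xHat zeroPt) := (if_pos le_rfl).symm
      _ ≤ uscEnv (tildeW w tHat) (tHat, xHat zeroPt) :=
        le_uscEnv (bddAbove_range_tildeW hbdd htHat) _

end OneSided

lemma uscEnv_add_uscEnv_le_of_isPairMaxAt {w₁ w₂ : ℝ × Pth d → ℝ} {φ : Eucl d × Eucl d → ℝ}
    {tHat : ℝ} {xHat yHat : Pth d} {ρ : ℝ → ℝ → ℝ} (hmax : IsPairMaxAt w₁ w₂ φ tHat xHat yHat)
    (hw₁ : HasShiftModulus w₁ tHat ρ) (hw₂ : HasShiftModulus w₂ tHat ρ) (hρ : LocalModulus ρ)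
    (hφ : Continuous φ) (hneg₁ : NegLimsupAtInfty w₁) (hneg₂ : NegLimsupAtInfty w₂)
    (htHat : 0 ≤ tHat) (t : ℝ) (x₀ y₀ : Eucl d) :
    uscEnv (tildeW w₁ tHat) (t, x₀) + uscEnv (tildeW w₂ tHat) (t, y₀)
      ≤ w₁ (tHat, xHat) + w₂ (tHat, yHat) - φ (xHat zeroPt, yHat zeroPt) + φ (x₀, y₀) := by
  refine le_of_forall_pos_le_add fun ε hε => add_le_of_forall_lt fun a₁ ha₁ a₂ ha₂ => ?_
  obtain ⟨N₁, hN₁⟩ := hneg₁.exists_normC_le a₁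
  obtain ⟨N₂, hN₂⟩ := hneg₂.exists_normC_le a₂
  obtain ⟨δ₁, hδ₁, hρ₁⟩ := hρ.exists_lt N₁ (by positivity : 0 < ε / 3)
  obtain ⟨δ₂, hδ₂, hρ₂⟩ := hρ.exists_lt N₂ (by positivity : 0 < ε / 3)
  obtain ⟨δ₃, hδ₃, hφ₃⟩ := Metric.continuous_iff.mp hφ (x₀, y₀) (ε / 3) (by positivity)
  set δ := min (min δ₁ δ₂ / 2) δ₃
  have hδ : 0 < δ := by positivity
  obtain ⟨s₁, hs₁, ξ, hξ, hξ₀, hwξ⟩ := exists_lt_of_lt_uscEnv_tildeW ha₁ hδ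
  obtain ⟨s₂, hs₂, η, hη, hη₀, hwη⟩ := exists_lt_of_lt_uscEnv_tildeW ha₂ hδ
  have hδ₁₂ : 2 * δ ≤ min δ₁ δ₂ := by linarith [min_le_left (min δ₁ δ₂ / 2) δ₃]
  set τ₁ := max s₁ tHat
  set τ₂ := max s₂ tHat
  set σ := max τ₁ τ₂
  have hgap₁ : σ < τ₁ + δ₁ := (max_max_lt_max_add hs₁ hs₂).trans_le
    (by linarith [min_le_left δ₁ δ₂])
  have hgap₂ : σ < τ₂ + δ₂ := (max_comm τ₁ τ₂ ▸ max_max_lt_max_add hs₂ hs₁).trans_le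
    (by linarith [min_le_right δ₁ δ₂])
  have hτ₁σ : τ₁ ≤ σ := le_max_left _ _
  have hτ₂σ : τ₂ ≤ σ := le_max_right _ _
  have hρξ := hρ₁ _ _ (sub_nonneg.mpr hτ₁σ) (by linarith) (normC_nonneg ξ)
    (hN₁ τ₁ (htHat.trans (le_max_right _ _)) ξ hξ hwξ)
  have hρη := hρ₂ _ _ (sub_nonneg.mpr hτ₂σ) (by linarith) (normC_nonneg η)
    (hN₂ τ₂ (htHat.trans (le_max_right _ _)) η hη hwη)
  have hfreeze₁ := hw₁ τ₁ σ (le_max_right _ _) hτ₁σ ξ hξ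
  have hfreeze₂ := hw₂ τ₂ σ (le_max_right _ _) hτ₂σ η hη
  have hjoint := hmax σ ((le_max_right _ _).trans hτ₁σ) _ (shift_mem_C0 hξ (σ - τ₁))
    _ (shift_mem_C0 hη (σ - τ₂))
  rw [shift_apply_zeroPt _ (sub_nonneg.mpr hτ₁σ), shift_apply_zeroPt _ (sub_nonneg.mpr hτ₂σ)]
    at hjoint
  have hφξη : φ (ξ zeroPt, η zeroPt) < φ (x₀, y₀) + ε / 3 := by
    have hclose : dist (ξ zeroPt, η zeroPt) (x₀, y₀) < δ₃ := by
      rw [Prod.dist_eq]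
      exact max_lt (hξ₀.trans_le (min_le_right _ _)) (hη₀.trans_le (min_le_right _ _))
    have := hφ₃ _ hclose
    rw [Real.dist_eq, abs_lt] at this
    linarith
  linarith

end Maximum

theorem envelope_maximum_general {d : ℕ}
    (w₁ w₂ : ℝ × Pth d → ℝ)
    (hbdd₁ : BddAboveOn w₁ (Lam d 0)) (hbdd₂ : BddAboveOn w₂ (Lam d 0))
    (hneg₁ : NegLimsupAtInfty w₁) (hneg₂ : NegLimsupAtInfty w₂)
    (tHat : ℝ) (htHat : 0 ≤ tHat)
    (ρ₁ : ℝ → ℝ → ℝ) (hρ₁ : LocalModulus ρ₁)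
    (hshift₁ : ∀ t s : ℝ, tHat ≤ t → t ≤ s → ∀ x ∈ C0 d,
      w₁ (t, x) - w₁ (s, shift x (s - t)) ≤ ρ₁ (s - t) (normC x))
    (hshift₂ : ∀ t s : ℝ, tHat ≤ t → t ≤ s → ∀ x ∈ C0 d,
      w₂ (t, x) - w₂ (s, shift x (s - t)) ≤ ρ₁ (s - t) (normC x))
    (φ : Eucl d × Eucl d → ℝ) (hφ : ContDiff ℝ 2 φ)
    (xHat yHat : Pth d) (hxHat : xHat ∈ C0 d) (hyHat : yHat ∈ C0 d)
    (hmax : ∀ t : ℝ, tHat ≤ t → ∀ x ∈ C0 d, ∀ y ∈ C0 d,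
      w₁ (t, x) + w₂ (t, y) - φ (x zeroPt, y zeroPt)
        ≤ w₁ (tHat, xHat) + w₂ (tHat, yHat) - φ (xHat zeroPt, yHat zeroPt)) :
    (∀ t : ℝ, 0 ≤ t → ∀ x0 y0 : Eucl d,
      uscEnv (tildeW w₁ tHat) (t, x0) + uscEnv (tildeW w₂ tHat) (t, y0) - φ (x0, y0)
        ≤ uscEnv (tildeW w₁ tHat) (tHat, xHat zeroPt)
          + uscEnv (tildeW w₂ tHat) (tHat, yHat zeroPt)
          - φ (xHat zeroPt, yHat zeroPt)) ∧
    uscEnv (tildeW w₁ tHat) (tHat, xHat zeroPt) = w₁ (tHat, xHat) ∧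
    uscEnv (tildeW w₂ tHat) (tHat, yHat zeroPt) = w₂ (tHat, yHat) := by
  have hmax' : IsPairMaxAt w₁ w₂ φ tHat xHat yHat := hmax
  have henv₁ := uscEnv_tildeW_eq_of_isPairMaxAt hmax' hshift₂ hρ₁ hφ.continuous hbdd₁ htHat
    hxHat hyHat
  have henv₂ := uscEnv_tildeW_eq_of_isPairMaxAt hmax'.swap hshift₁ hρ₁
    (hφ.continuous.comp continuous_swap) hbdd₂ htHat hyHat hxHat
  refine ⟨fun t _ x0 y0 => ?_, henv₁, henv₂⟩
  rw [henv₁, henv₂]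
  linarith [uscEnv_add_uscEnv_le_of_isPairMaxAt hmax' hshift₁ hshift₂ hρ₁ hφ.continuous hneg₁
    hneg₂ htHat t x0 y0]

/-- Lemma 6.5: the envelopes `w̃₁^{t̂,*}, w̃₂^{t̂,*}` inherit the
maximum of `w₁ + w₂ - φ` at `(t̂, x̂(0), ŷ(0))`, with matching values. -/
theorem envelope_maximum {d : ℕ}
    (w₁ w₂ : ℝ × Pth d → ℝ)
    (husc₁ : DUSCOn w₁ (Lam d 0)) (husc₂ : DUSCOn w₂ (Lam d 0))
    (hbdd₁ : BddAboveOn w₁ (Lam d 0)) (hbdd₂ : BddAboveOn w₂ (Lam d 0))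
    (hneg₁ : NegLimsupAtInfty w₁) (hneg₂ : NegLimsupAtInfty w₂)
    (tHat : ℝ) (htHat : 0 ≤ tHat)
    (ρ₁ : ℝ → ℝ → ℝ) (hρ₁ : LocalModulus ρ₁)
    (hshift₁ : ∀ t s : ℝ, tHat ≤ t → t ≤ s → ∀ x ∈ C0 d,
      w₁ (t, x) - w₁ (s, shift x (s - t)) ≤ ρ₁ (s - t) (normC x))
    (hshift₂ : ∀ t s : ℝ, tHat ≤ t → t ≤ s → ∀ x ∈ C0 d,
      w₂ (t, x) - w₂ (s, shift x (s - t)) ≤ ρ₁ (s - t) (normC x))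
    (φ : Eucl d × Eucl d → ℝ) (hφ : ContDiff ℝ 2 φ)
    (xHat yHat : Pth d) (hxHat : xHat ∈ C0 d) (hyHat : yHat ∈ C0 d)
    (hmax : ∀ t : ℝ, tHat ≤ t → ∀ x ∈ C0 d, ∀ y ∈ C0 d,
      w₁ (t, x) + w₂ (t, y) - φ (x zeroPt, y zeroPt)
        ≤ w₁ (tHat, xHat) + w₂ (tHat, yHat) - φ (xHat zeroPt, yHat zeroPt)) :
    (∀ t : ℝ, 0 ≤ t → ∀ x0 y0 : Eucl d,
      uscEnv (tildeW w₁ tHat) (t, x0) + uscEnv (tildeW w₂ tHat) (t, y0) - φ (x0, y0)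
        ≤ uscEnv (tildeW w₁ tHat) (tHat, xHat zeroPt)
          + uscEnv (tildeW w₂ tHat) (tHat, yHat zeroPt)
          - φ (xHat zeroPt, yHat zeroPt)) ∧
    uscEnv (tildeW w₁ tHat) (tHat, xHat zeroPt) = w₁ (tHat, xHat) ∧
    uscEnv (tildeW w₂ tHat) (tHat, yHat zeroPt) = w₂ (tHat, yHat) :=
  envelope_maximum_general w₁ w₂ hbdd₁ hbdd₂ hneg₁ hneg₂ tHat htHat ρ₁ hρ₁ hshift₁ hshift₂ φ hφ xHat
    yHat hxHat hyHat hmax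
end PathHJB
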